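/- For every positive long root α ∈ Φ_lg ∩ Φ⁺, one has l(x_α s_{α̃}) = l(s_{α̃}) − l(x_α). -/

import Mathlib

open scoped RealInnerProductSpace Classical

noncomputable section

variable {V : Type} [NormedAddCommGroup V] [InnerProductSpace ℝ V] [FiniteDimensional ℝ V]

/-- The orthogonal reflection of `V` in the hyperplane orthogonal to `α`
(the reflection `s_α` when `α` is a root). -/
def sref (α : V) : V ≃ₗᵢ[ℝ] V := Submodule.reflection (Submodule.span ℝ {α})ᗮ

/-- The pairing `⟨β, γ∨⟩ = 2(β|γ)/(γ|γ)` of a vector with the coroot of `γ`. -/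
def cpair (β γ : V) : ℝ := 2 * ⟪β, γ⟫ / ⟪γ, γ⟫

/-- An irreducible reduced (crystallographic) root system in the real inner product
space `V`, the inner product being invariant under the Weyl group (automatic, since
reflections are isometries), normalized so that the shortest roots have squared length `1`. -/
structure NRootSystem (V : Type) [NormedAddCommGroup V] [InnerProductSpace ℝ V]
    [FiniteDimensional ℝ V] where
  Φ : Finset V
  nonempty : Φ.Nonempty
  zero_not_mem : (0 : V) ∉ Φ
  span_eq_top : Submodule.span ℝ (Φ : Set V) = ⊤
  reduced : ∀ α ∈ Φ, ∀ t : ℝ, t • α ∈ Φ → t = 1 ∨ t = -1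
  pairing_int : ∀ α ∈ Φ, ∀ β ∈ Φ, ∃ n : ℤ, 2 * ⟪β, α⟫ = n * ⟪α, α⟫
  reflect_mem : ∀ α ∈ Φ, ∀ β ∈ Φ, sref α β ∈ Φ
  irreducible : ∀ S : Finset V, S ⊆ Φ → S.Nonempty → (Φ \ S).Nonempty →
    ∃ α ∈ S, ∃ β ∈ Φ \ S, ⟪α, β⟫ ≠ 0
  norm_one_le : ∀ α ∈ Φ, 1 ≤ ⟪α, α⟫
  exists_norm_one : ∃ α ∈ Φ, ⟪α, α⟫ = 1

namespace NRootSystem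

variable (R : NRootSystem V)

/-- `r`, the maximal squared length of a root. -/
def r : ℝ := R.Φ.sup' R.nonempty fun α => ⟪α, α⟫

/-- long roots -/
def IsLong (α : V) : Prop := α ∈ R.Φ ∧ ⟪α, α⟫ = R.r

/-- short roots -/
def IsShort (α : V) : Prop := α ∈ R.Φ ∧ ⟪α, α⟫ < R.r

/-- The Weyl group `W`, generated by the reflections in the roots. -/
def Weyl : Subgroup (V ≃ₗᵢ[ℝ] V) := Subgroup.closure (sref '' (R.Φ : Set V))

end NRootSystem

/-- The standard parabolic subgroup `W_I` generated by the reflections in `I ⊆ Δ`. -/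
def WeylP (I : Finset V) : Subgroup (V ≃ₗᵢ[ℝ] V) := Subgroup.closure (sref '' (I : Set V))

/-- A base (set of simple roots) `Δ` of the root system, together with the
integral coordinates `coeff γ α` of each root `γ` in the basis `Δ`; every root is a
nonnegative or a nonpositive integral combination of the simple roots. -/
structure Base {V : Type} [NormedAddCommGroup V] [InnerProductSpace ℝ V]
    [FiniteDimensional ℝ V] (R : NRootSystem V) where
  Δ : Finset V
  subset : Δ ⊆ R.Φ
  indep : LinearIndependent ℝ (fun a : {x : V // x ∈ Δ} => (a : V))
  coeff : V → V → ℤ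
  coeff_spec : ∀ γ ∈ R.Φ, γ = ∑ α ∈ Δ, (coeff γ α : ℝ) • α
  coeff_sign : ∀ γ ∈ R.Φ, (∀ α ∈ Δ, 0 ≤ coeff γ α) ∨ (∀ α ∈ Δ, coeff γ α ≤ 0)

namespace Base

variable {R : NRootSystem V} (B : Base R)

/-- positive roots -/
def IsPos (γ : V) : Prop := γ ∈ R.Φ ∧ ∀ α ∈ B.Δ, 0 ≤ B.coeff γ α

/-- negative roots -/
def IsNeg (γ : V) : Prop := γ ∈ R.Φ ∧ ∀ α ∈ B.Δ, B.coeff γ α ≤ 0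

/-- the height of a root -/
def ht (γ : V) : ℤ := ∑ α ∈ B.Δ, B.coeff γ α

/-- the dual height `ht∨ γ = ht (γ∨)`: the height of the coroot `γ∨ = 2γ/(γ|γ)`
with respect to the basis of simple coroots `α∨ = 2α/(α|α)`, `α ∈ Δ`. -/
def htv (γ : V) : ℝ := ∑ α ∈ B.Δ, (B.coeff γ α : ℝ) * ⟪α, α⟫ / ⟪γ, γ⟫

/-- The length of `w`: the minimal length of an expression of `w` as a product of
simple reflections. -/
def len (w : V ≃ₗᵢ[ℝ] V) : ℕ :=
  sInf {n | ∃ g : Fin n → V, (∀ i, g i ∈ B.Δ) ∧ w = (List.ofFn fun i => sref (g i)).prod}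

/-- `w` is the longest element of the subgroup `H`. -/
def IsLongest (H : Subgroup (V ≃ₗᵢ[ℝ] V)) (w : V ≃ₗᵢ[ℝ] V) : Prop :=
  w ∈ H ∧ ∀ u ∈ H, B.len u ≤ B.len w

/-- `X_I = {w ∈ W | w(Φ_I⁺) ⊆ Φ⁺}`, the set of minimal length coset
representatives of `W/W_I`. -/
def XI (I : Finset V) : Set (V ≃ₗᵢ[ℝ] V) :=
  {w | w ∈ R.Weyl ∧
    ∀ γ, γ ∈ R.Φ → γ ∈ Submodule.span ℝ (I : Set V) → B.IsPos γ → B.IsPos (w γ)}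

/-- `h` is the highest root. -/
def IsHighest (h : V) : Prop :=
  h ∈ R.Φ ∧ ∀ γ ∈ R.Φ, ∀ α ∈ B.Δ, B.coeff γ α ≤ B.coeff h α

/-- `Ĩ = {α ∈ Δ | (h|α) = 0}`, the simple roots orthogonal to the highest root `h`. -/
def Itil (h : V) : Finset V := B.Δ.filter fun α => ⟪h, α⟫ = 0

/-- The level `L(α)` of a long root `α`, where `h` is the highest root:
`L(α) = ht∨(h) − ht∨(α)` if `α > 0` and `L(α) = ht∨(h) − ht∨(α) − 1` if `α < 0`. -/
def level (h α : V) : ℝ :=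
  if B.IsPos α then B.htv h - B.htv α else B.htv h - B.htv α - 1

/-- The elementary step relation `β →_γ α` on long roots (`γ` a positive root):
`α = s_γ(β)` and `L(α) = L(β) + 1`. -/
def Step (h γ β α : V) : Prop :=
  R.IsLong β ∧ R.IsLong α ∧ B.IsPos γ ∧ α = sref γ β ∧
    B.level h α = B.level h β + 1

/-- `g` is the sequence of positive roots of a path
`β = β₀ →_{g 0} β₁ →_{g 1} ⋯ →_{g (n-1)} β_n = α` from `β` to `α`. -/
def IsPathWord (h : V) {n : ℕ} (g : Fin n → V) (β α : V) : Prop :=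
  ∃ c : Fin (n + 1) → V, c 0 = β ∧ c (Fin.last n) = α ∧
    ∀ i : Fin n, B.Step h (g i) (c i.castSucc) (c i.succ)

/-- a path all of whose steps use simple roots -/
def IsSimplePathWord (h : V) {n : ℕ} (g : Fin n → V) (β α : V) : Prop :=
  B.IsPathWord h g β α ∧ ∀ i, g i ∈ B.Δ

/-- there is a path from `β` to `α`, i.e. `α ⪯ β` -/
def HasPath (h β α : V) : Prop := ∃ (n : ℕ) (g : Fin n → V), B.IsPathWord h g β α

/-- there is a simple path from `β` to `α` -/
def HasSimplePath (h β α : V) : Prop :=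
  ∃ (n : ℕ) (g : Fin n → V), B.IsSimplePathWord h g β α

/-- The covering relation `w →_γ w'` for the Bruhat order:
`w' = s_γ w` and `l(w') = l(w) + 1`, for a positive root `γ`. -/
def BStep (γ : V) (w w' : V ≃ₗᵢ[ℝ] V) : Prop :=
  B.IsPos γ ∧ w' = sref γ * w ∧ B.len w' = B.len w + 1

/-- The Bruhat order on `W`: the reflexive–transitive closure of the covering
relations. -/
def bruhatLE : (V ≃ₗᵢ[ℝ] V) → (V ≃ₗᵢ[ℝ] V) → Prop :=
  Relation.ReflTransGen fun w w' => ∃ γ, B.BStep γ w w'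

/-- `x` is an element of `W` with `x(β) = α` of the minimal possible length
`|L(α) − L(β)|` (this is the element `x_{αβ}` when it exists). -/
def MinTake (h β α : V) (x : V ≃ₗᵢ[ℝ] V) : Prop :=
  x ∈ R.Weyl ∧ x β = α ∧ (B.len x : ℝ) = |B.level h α - B.level h β|

/-- `g` is a reduced expression of `x` as a product of simple reflections. -/
def IsReducedWord {n : ℕ} (g : Fin n → V) (x : V ≃ₗᵢ[ℝ] V) : Prop :=
  (∀ i, g i ∈ B.Δ) ∧ x = (List.ofFn fun i => sref (g i)).prod ∧ n = B.len x

/-- The depth of a positive root `β`: the minimal integer `k` such that there is an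
element `w` of `W` of length `k` with `w(β) < 0`. -/
def depth (β : V) : ℕ := sInf {n | ∃ w ∈ R.Weyl, B.len w = n ∧ B.IsNeg (w β)}

end Base

/-! Since `l(w) = |N(w)|` for `w ∈ W`, where `N(w) = inversions w` is the set of positive roots
that `w` makes negative, it suffices to show `N(x) ⊆ N(s_α̃)` for `x ∈ X_Ĩ`: then `γ ↦ -s_α̃ γ`
maps `N(x s_α̃)` bijectively onto `N(s_α̃) \ N(x)`. For the inclusion, write `s_α̃ γ = γ - n α̃`
for `γ > 0`. Because `α̃` is the highest root, `n ≥ 0`, and `n > 0` makes `s_α̃ γ` negative.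
So a positive root not inverted by `s_α̃` is orthogonal to `α̃`, hence lies in the span of `Ĩ`,
where `x` keeps it positive. -/

section Reflection

variable {E : Type} [NormedAddCommGroup E] [InnerProductSpace ℝ E]

theorem sref_apply (α v : E) : sref α v = v - (2 * ⟪v, α⟫ / ⟪α, α⟫) • α := by
  rw [sref, Submodule.reflection_orthogonal_apply, Submodule.reflection_singleton_apply,
    real_inner_self_eq_norm_sq, real_inner_comm]
  module

theorem sref_sref (α v : E) : sref α (sref α v) = v := Submodule.reflection_reflection _ v

theorem sref_mul_self (α : E) : sref α * sref α = 1 := Submodule.reflection_mul_reflection _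

theorem sref_inv (α : E) : (sref α)⁻¹ = sref α := inv_eq_of_mul_eq_one_right (sref_mul_self α)

theorem sref_self (α : E) : sref α α = -α :=
  Submodule.reflection_orthogonalComplement_singleton_eq_neg α

theorem sref_neg (α : E) : sref (-α) = sref α := by
  simp only [sref, ← Set.neg_singleton, Submodule.span_neg]

theorem sref_map (w : E ≃ₗᵢ[ℝ] E) (α : E) : sref (w α) = w * sref α * w⁻¹ := by
  ext v
  change sref (w α) v = w (sref α (w.symm v))
  rw [sref_apply, sref_apply, map_sub, map_smul, LinearIsometryEquiv.apply_symm_apply,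
    ← LinearIsometryEquiv.inner_map_map w (w.symm v), LinearIsometryEquiv.apply_symm_apply,
    LinearIsometryEquiv.inner_map_map]

end Reflection

namespace NRootSystem

variable (R : NRootSystem V) {γ δ : V}

theorem inner_self_pos (hγ : γ ∈ R.Φ) : 0 < ⟪γ, γ⟫ := one_pos.trans_le (R.norm_one_le γ hγ)

theorem neg_mem (hγ : γ ∈ R.Φ) : -γ ∈ R.Φ := sref_self γ ▸ R.reflect_mem γ hγ γ hγ

theorem exists_sref_eq_sub_smul (hγ : γ ∈ R.Φ) (hδ : δ ∈ R.Φ) :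
    ∃ n : ℤ, 2 * ⟪γ, δ⟫ = n * ⟪δ, δ⟫ ∧ sref δ γ = γ - (n : ℝ) • δ := by
  obtain ⟨n, hn⟩ := R.pairing_int δ hδ γ hγ
  refine ⟨n, hn, ?_⟩
  rw [sref_apply, hn, mul_div_cancel_right₀ _ (R.inner_self_pos hδ).ne']

theorem apply_mem_of_mem_weyl {w : V ≃ₗᵢ[ℝ] V} (hw : w ∈ R.Weyl) (hγ : γ ∈ R.Φ) : w γ ∈ R.Φ := by
  induction hw using Subgroup.closure_induction_left with
  | one => exact hγ
  | mul_left _ hs _ _ ih =>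
    obtain ⟨δ, hδ, rfl⟩ := hs
    exact R.reflect_mem δ hδ _ ih
  | inv_mul_cancel _ hs _ _ ih =>
    obtain ⟨δ, hδ, rfl⟩ := hs
    rw [sref_inv]
    exact R.reflect_mem δ hδ _ ih

end NRootSystem

namespace Base

variable {R : NRootSystem V} {B : Base R} {α β γ δ : V} {w x : V ≃ₗᵢ[ℝ] V}

theorem coeff_eq_of_eq_sum (hγ : γ ∈ R.Φ) {f : V → ℝ} (h : γ = ∑ α ∈ B.Δ, f α • α)
    (hβ : β ∈ B.Δ) : (B.coeff γ β : ℝ) = f β := by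
  have h0 : ∑ α ∈ B.Δ.attach, ((B.coeff γ α : ℝ) - f α) • (α : V) = 0 := by
    rw [Finset.sum_attach B.Δ fun α => ((B.coeff γ α : ℝ) - f α) • α]
    simp only [sub_smul, Finset.sum_sub_distrib, ← B.coeff_spec γ hγ, ← h, sub_self]
  have := linearIndependent_iff'.mp B.indep _ _ h0 ⟨β, hβ⟩ (Finset.mem_attach _ _)
  linarith

theorem coeff_sub_smul (hγ : γ ∈ R.Φ) (hδ : δ ∈ R.Φ) {n : ℤ} (hmem : γ - (n : ℝ) • δ ∈ R.Φ)
    (hβ : β ∈ B.Δ) : B.coeff (γ - (n : ℝ) • δ) β = B.coeff γ β - n * B.coeff δ β := by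
  have h : γ - (n : ℝ) • δ = ∑ α ∈ B.Δ, ((B.coeff γ α : ℝ) - n * B.coeff δ α) • α := by
    simp only [sub_smul, mul_smul, Finset.sum_sub_distrib, ← Finset.smul_sum,
      ← B.coeff_spec _ hγ, ← B.coeff_spec _ hδ]
  exact_mod_cast coeff_eq_of_eq_sum hmem h hβ

theorem coeff_neg (hγ : γ ∈ R.Φ) (hβ : β ∈ B.Δ) : B.coeff (-γ) β = -B.coeff γ β := by
  have h : -γ = ∑ α ∈ B.Δ, (-(B.coeff γ α : ℝ)) • α := by
    simp only [neg_smul, Finset.sum_neg_distrib, ← B.coeff_spec _ hγ]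
  exact_mod_cast coeff_eq_of_eq_sum (R.neg_mem hγ) h hβ

theorem coeff_of_mem_base (hα : α ∈ B.Δ) (hβ : β ∈ B.Δ) :
    B.coeff α β = if β = α then 1 else 0 := by
  have h : α = ∑ β ∈ B.Δ, (if β = α then (1 : ℝ) else 0) • β := by
    simp only [ite_smul, one_smul, zero_smul, Finset.sum_ite_eq', if_pos hα]
  have := coeff_eq_of_eq_sum (B.subset hα) h hβ
  split_ifs at this ⊢ <;> exact_mod_cast this

theorem isPos_or_isNeg (hγ : γ ∈ R.Φ) : B.IsPos γ ∨ B.IsNeg γ :=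
  (B.coeff_sign γ hγ).imp (⟨hγ, ·⟩) (⟨hγ, ·⟩)

theorem isPos_of_mem_base (hα : α ∈ B.Δ) : B.IsPos α :=
  ⟨B.subset hα, fun β hβ => by rw [coeff_of_mem_base hα hβ]; split_ifs <;> omega⟩

theorem IsPos.exists_one_le_coeff (hγ : B.IsPos γ) : ∃ β ∈ B.Δ, 1 ≤ B.coeff γ β := by
  by_contra! hlt
  apply R.zero_not_mem
  convert hγ.1
  rw [B.coeff_spec γ hγ.1]
  refine (Finset.sum_eq_zero fun β hβ => ?_).symm
  rw [show B.coeff γ β = 0 by linarith [hγ.2 β hβ, hlt β hβ], Int.cast_zero, zero_smul]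

theorem IsPos.not_isNeg (hγ : B.IsPos γ) : ¬B.IsNeg γ := fun hn => by
  obtain ⟨β, hβ, h1⟩ := hγ.exists_one_le_coeff
  linarith [hn.2 β hβ]

theorem isPos_of_one_le_coeff (hγ : γ ∈ R.Φ) (hβ : β ∈ B.Δ) (h1 : 1 ≤ B.coeff γ β) :
    B.IsPos γ :=
  (isPos_or_isNeg hγ).resolve_right fun hn => by linarith [hn.2 β hβ]

theorem isPos_neg_iff (hγ : γ ∈ R.Φ) : B.IsPos (-γ) ↔ B.IsNeg γ := by
  simp only [IsPos, IsNeg, R.neg_mem hγ, hγ, true_and]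
  exact forall₂_congr fun β hβ => by rw [coeff_neg hγ hβ]; omega

theorem isNeg_neg_iff (hγ : γ ∈ R.Φ) : B.IsNeg (-γ) ↔ B.IsPos γ := by
  simpa using (isPos_neg_iff (B := B) (R.neg_mem hγ)).symm

theorem isPos_sref_of_mem_base (hα : α ∈ B.Δ) (hγ : B.IsPos γ) (hne : γ ≠ α) :
    B.IsPos (sref α γ) := by
  obtain ⟨n, -, hs⟩ := R.exists_sref_eq_sub_smul hγ.1 (B.subset hα)
  have hmem := R.reflect_mem α (B.subset hα) γ hγ.1
  obtain ⟨β, hβ, hβα, h1⟩ : ∃ β ∈ B.Δ, β ≠ α ∧ 1 ≤ B.coeff γ β := by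
    by_contra! hsmall
    have hγα : γ = (B.coeff γ α : ℝ) • α := by
      conv_lhs => rw [B.coeff_spec γ hγ.1]
      refine Finset.sum_eq_single_of_mem α hα fun β hβ hβα => ?_
      rw [show B.coeff γ β = 0 by linarith [hγ.2 β hβ, hsmall β hβ hβα], Int.cast_zero,
        zero_smul]
    rcases R.reduced α (B.subset hα) _ (hγα ▸ hγ.1) with h | h
    · exact hne (by rw [hγα, h, one_smul])
    · have : B.coeff γ α = -1 := by exact_mod_cast h
      linarith [hγ.2 α hα]
  refine isPos_of_one_le_coeff hmem hβ ?_
  rw [hs] at hmem ⊢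
  rw [coeff_sub_smul hγ.1 (B.subset hα) hmem hβ, coeff_of_mem_base hα hβ, if_neg hβα]
  omega

theorem inner_eq_sum_coeff (hγ : γ ∈ R.Φ) (v : V) :
    ⟪v, γ⟫ = ∑ α ∈ B.Δ, (B.coeff γ α : ℝ) * ⟪v, α⟫ := by
  conv_lhs => rw [B.coeff_spec γ hγ]
  simp only [inner_sum, real_inner_smul_right]

theorem IsPos.exists_inner_pos (hγ : B.IsPos γ) : ∃ α ∈ B.Δ, 0 < ⟪γ, α⟫ := by
  by_contra! h
  have hsum : ∑ α ∈ B.Δ, (B.coeff γ α : ℝ) * ⟪γ, α⟫ ≤ 0 :=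
    Finset.sum_nonpos fun α hα =>
      mul_nonpos_of_nonneg_of_nonpos (by exact_mod_cast hγ.2 α hα) (h α hα)
  linarith [R.inner_self_pos hγ.1, inner_eq_sum_coeff (B := B) hγ.1 γ]

theorem IsPos.ht_nonneg (hγ : B.IsPos γ) : 0 ≤ B.ht γ := Finset.sum_nonneg hγ.2

theorem ht_sref_of_mem_base (hα : α ∈ B.Δ) (hγ : γ ∈ R.Φ) {n : ℤ}
    (hs : sref α γ = γ - (n : ℝ) • α) : B.ht (sref α γ) = B.ht γ - n := by
  have hmem := R.reflect_mem α (B.subset hα) γ hγ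
  rw [hs] at hmem ⊢
  simp only [ht]
  rw [Finset.sum_congr rfl fun β hβ => coeff_sub_smul hγ (B.subset hα) hmem hβ,
    Finset.sum_sub_distrib, ← Finset.mul_sum,
    Finset.sum_congr rfl fun β hβ => coeff_of_mem_base hα hβ, Finset.sum_ite_eq', if_pos hα,
    mul_one]

variable (B) in
def IsWord (ws : List V) (w : V ≃ₗᵢ[ℝ] V) : Prop :=
  (∀ β ∈ ws, β ∈ B.Δ) ∧ (ws.map sref).prod = w

theorem isWord_nil : B.IsWord [] 1 := ⟨by simp, rfl⟩

theorem isWord_singleton (hα : α ∈ B.Δ) : B.IsWord [α] (sref α) := ⟨by simpa using hα, by simp⟩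

theorem IsWord.append {ws₁ ws₂ : List V} {w₁ w₂ : V ≃ₗᵢ[ℝ] V} (h₁ : B.IsWord ws₁ w₁)
    (h₂ : B.IsWord ws₂ w₂) : B.IsWord (ws₁ ++ ws₂) (w₁ * w₂) :=
  ⟨fun β hβ => (List.mem_append.mp hβ).elim (h₁.1 β) (h₂.1 β), by
    rw [List.map_append, List.prod_append, h₁.2, h₂.2]⟩

theorem IsWord.mem_weyl {ws : List V} {w : V ≃ₗᵢ[ℝ] V} (h : B.IsWord ws w) : w ∈ R.Weyl := by
  rw [← h.2]
  refine R.Weyl.list_prod_mem fun s hs => ?_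
  obtain ⟨β, hβ, rfl⟩ := List.mem_map.mp hs
  exact Subgroup.subset_closure ⟨β, B.subset (h.1 β hβ), rfl⟩

/-- Descent along the height: for a simple `α` with `(γ|α) > 0`, `s_γ` is conjugate by `s_α`
to the reflection in the lower root `s_α γ`. -/
theorem exists_isWord_sref_of_isPos (hγ : B.IsPos γ) : ∃ ws, B.IsWord ws (sref γ) := by
  induction hn : (B.ht γ).toNat using Nat.strong_induction_on generalizing γ with
  | _ n ih =>
  obtain ⟨α, hα, hinner⟩ := hγ.exists_inner_pos
  by_cases hγα : γ = α
  · exact ⟨[α], by rw [hγα]; exact isWord_singleton hα⟩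
  obtain ⟨m, hm, hs⟩ := R.exists_sref_eq_sub_smul hγ.1 (B.subset hα)
  have hm1 : 0 < m := by
    have : (0 : ℝ) < m := pos_of_mul_pos_left (by linarith) (R.inner_self_pos (B.subset hα)).le
    exact_mod_cast this
  have hpos := isPos_sref_of_mem_base hα hγ hγα
  have hht := ht_sref_of_mem_base hα hγ.1 hs
  obtain ⟨ws, hws⟩ := ih _ (by have := hpos.ht_nonneg; omega) hpos rfl
  have hconj : sref γ = sref α * sref (sref α γ) * sref α := by
    rw [sref_map, sref_inv, ← mul_assoc, ← mul_assoc, sref_mul_self, one_mul, mul_assoc,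
      sref_mul_self, mul_one]
  refine ⟨[α] ++ ws ++ [α], ?_⟩
  rw [hconj]
  exact ((isWord_singleton hα).append hws).append (isWord_singleton hα)

theorem exists_isWord_sref (hγ : γ ∈ R.Φ) : ∃ ws, B.IsWord ws (sref γ) := by
  rcases isPos_or_isNeg (B := B) hγ with hp | hn
  · exact exists_isWord_sref_of_isPos hp
  · simpa only [sref_neg] using exists_isWord_sref_of_isPos ((isPos_neg_iff hγ).mpr hn)

theorem exists_isWord_of_mem_weyl {w : V ≃ₗᵢ[ℝ] V} (hw : w ∈ R.Weyl) : ∃ ws, B.IsWord ws w := by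
  induction hw using Subgroup.closure_induction_left with
  | one => exact ⟨[], isWord_nil⟩
  | mul_left _ hs _ _ ih =>
    obtain ⟨γ, hγ, rfl⟩ := hs
    obtain ⟨ws₁, h₁⟩ := exists_isWord_sref (B := B) hγ
    obtain ⟨ws₂, h₂⟩ := ih
    exact ⟨ws₁ ++ ws₂, h₁.append h₂⟩
  | inv_mul_cancel _ hs _ _ ih =>
    obtain ⟨γ, hγ, rfl⟩ := hs
    obtain ⟨ws₁, h₁⟩ := exists_isWord_sref (B := B) hγ
    obtain ⟨ws₂, h₂⟩ := ih
    exact ⟨ws₁ ++ ws₂, sref_inv γ ▸ h₁.append h₂⟩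

theorem IsWord.exists_ofFn {ws : List V} {w : V ≃ₗᵢ[ℝ] V} (h : B.IsWord ws w) :
    ∃ g : Fin ws.length → V, (∀ i, g i ∈ B.Δ) ∧ w = (List.ofFn fun i => sref (g i)).prod := by
  refine ⟨ws.get, fun i => h.1 _ (List.get_mem ws i), ?_⟩
  rw [← h.2]
  conv_lhs => rw [← List.ofFn_get ws]
  rw [List.map_ofFn]
  rfl

theorem IsWord.len_le_length {ws : List V} {w : V ≃ₗᵢ[ℝ] V} (h : B.IsWord ws w) :
    B.len w ≤ ws.length :=
  Nat.sInf_le h.exists_ofFn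

theorem exists_isWord_length_eq_len {w : V ≃ₗᵢ[ℝ] V} (hw : w ∈ R.Weyl) :
    ∃ ws, B.IsWord ws w ∧ ws.length = B.len w := by
  obtain ⟨ws, hws⟩ := exists_isWord_of_mem_weyl (B := B) hw
  obtain ⟨g, hg, hprod⟩ := Nat.sInf_mem (⟨_, hws.exists_ofFn⟩ : {n | ∃ g : Fin n → V,
    (∀ i, g i ∈ B.Δ) ∧ w = (List.ofFn fun i => sref (g i)).prod}.Nonempty)
  refine ⟨List.ofFn g, ⟨fun β hβ => ?_, by rw [List.map_ofFn]; exact hprod.symm⟩,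
    List.length_ofFn⟩
  obtain ⟨i, rfl⟩ := List.mem_ofFn.mp hβ
  exact hg i

variable (B) in
def inversions (w : V ≃ₗᵢ[ℝ] V) : Finset V := R.Φ.filter fun γ => B.IsPos γ ∧ B.IsNeg (w γ)

theorem mem_inversions : γ ∈ B.inversions w ↔ B.IsPos γ ∧ B.IsNeg (w γ) :=
  Finset.mem_filter.trans ⟨fun h => h.2, fun h => ⟨h.1.1, h⟩⟩

theorem inversions_one : B.inversions 1 = ∅ :=
  Finset.eq_empty_of_forall_notMem fun _ hγ =>
    (mem_inversions.mp hγ).1.not_isNeg (mem_inversions.mp hγ).2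

theorem inversions_mul_sref_of_isPos (hw : w ∈ R.Weyl) (hα : α ∈ B.Δ) (hp : B.IsPos (w α)) :
    B.inversions (w * sref α) = insert α ((B.inversions w).image (sref α)) := by
  ext γ
  simp only [Finset.mem_insert, Finset.mem_image, mem_inversions, LinearIsometryEquiv.coe_mul,
    Function.comp_apply]
  constructor
  · rintro ⟨hγ, hn⟩
    by_cases hγα : γ = α
    · exact Or.inl hγα
    · exact Or.inr ⟨sref α γ, ⟨isPos_sref_of_mem_base hα hγ hγα, hn⟩, sref_sref α γ⟩
  · rintro (rfl | ⟨δ, ⟨hδ, hn⟩, rfl⟩)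
    · rw [sref_self, map_neg, isNeg_neg_iff (R.apply_mem_of_mem_weyl hw (B.subset hα))]
      exact ⟨isPos_of_mem_base hα, hp⟩
    · have hδα : δ ≠ α := by rintro rfl; exact hp.not_isNeg hn
      rw [sref_sref]
      exact ⟨isPos_sref_of_mem_base hα hδ hδα, hn⟩

theorem card_inversions_mul_sref_of_isPos (hw : w ∈ R.Weyl) (hα : α ∈ B.Δ)
    (hp : B.IsPos (w α)) : (B.inversions (w * sref α)).card = (B.inversions w).card + 1 := by
  rw [inversions_mul_sref_of_isPos hw hα hp, Finset.card_insert_of_notMem,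
    Finset.card_image_of_injective _ (sref α).injective]
  intro hmem
  obtain ⟨δ, hδ, hδα⟩ := Finset.mem_image.mp hmem
  have hδ' : δ = -α := by rw [← sref_self, ← sref_sref α δ, hδα]
  refine (mem_inversions.mp hδ).1.not_isNeg ?_
  rw [hδ', isNeg_neg_iff (B.subset hα)]
  exact isPos_of_mem_base hα

/-- The exchange condition. If `w = s_β u` with `u α > 0`, then `u α = β` since `s_β` permutes
`Φ⁺ \ {β}`; so `s_β = u s_α u⁻¹` and `w s_α = u`. -/
theorem IsWord.exists_isWord_mul_sref_of_isNeg {ws : List V} (h : B.IsWord ws w)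
    (hα : α ∈ B.Δ) (hn : B.IsNeg (w α)) :
    ∃ ws', B.IsWord ws' (w * sref α) ∧ ws'.length + 1 = ws.length := by
  induction ws generalizing w with
  | nil =>
    obtain ⟨-, rfl⟩ := h
    exact absurd hn (isPos_of_mem_base hα).not_isNeg
  | cons β ws ih =>
    obtain ⟨hmem, rfl⟩ := h
    have hβ : β ∈ B.Δ := hmem β List.mem_cons_self
    have hu : B.IsWord ws (ws.map sref).prod :=
      ⟨fun γ hγ => hmem γ (List.mem_cons_of_mem _ hγ), rfl⟩
    set u := (ws.map sref).prod
    have hw : ((β :: ws).map sref).prod = sref β * u := rfl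
    rw [hw] at hn ⊢
    have huα := R.apply_mem_of_mem_weyl hu.mem_weyl (B.subset hα)
    rcases isPos_or_isNeg (B := B) huα with hp | hn'
    · have huαβ : u α = β := by
        by_contra hne
        exact (isPos_sref_of_mem_base hβ hp hne).not_isNeg hn
      have hcancel : sref β * u * sref α = u := by
        rw [← huαβ, sref_map]
        simp only [mul_assoc, inv_mul_cancel_left, sref_mul_self, mul_one]
      exact ⟨ws, by rwa [hcancel], rfl⟩
    · obtain ⟨ws', hws', hlen⟩ := ih hu hn'
      refine ⟨β :: ws', ?_, by simp [hlen]⟩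
      rw [mul_assoc]
      exact (isWord_singleton hβ).append hws'

theorem len_mul_sref_le (hw : w ∈ R.Weyl) (hα : α ∈ B.Δ) : B.len (w * sref α) ≤ B.len w + 1 := by
  obtain ⟨ws, hws, hlen⟩ := exists_isWord_length_eq_len (B := B) hw
  simpa [hlen] using (hws.append (isWord_singleton hα)).len_le_length

/-- If the last letter `α` of a reduced word for `u s_α` had `u α < 0`, the exchange condition
would shorten the word; so every letter adds exactly one inversion. -/
theorem IsWord.card_inversions_eq_length {ws : List V} (h : B.IsWord ws w)
    (hred : ws.length ≤ B.len w) : (B.inversions w).card = ws.length := by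
  induction ws using List.reverseRecOn generalizing w with
  | nil =>
    obtain ⟨-, rfl⟩ := h
    simp [inversions_one]
  | append_singleton ws α ih =>
    obtain ⟨hmem, rfl⟩ := h
    have hα : α ∈ B.Δ := hmem α (by simp)
    have hu : B.IsWord ws (ws.map sref).prod := ⟨fun γ hγ => hmem γ (by simp [hγ]), rfl⟩
    set u := (ws.map sref).prod
    have hw : ((ws ++ [α]).map sref).prod = u * sref α := by simp [u]
    rw [hw] at hred ⊢
    rw [List.length_append, List.length_singleton] at hred ⊢
    have huα := R.apply_mem_of_mem_weyl hu.mem_weyl (B.subset hα)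
    rcases isPos_or_isNeg (B := B) huα with hp | hn
    · have := len_mul_sref_le hu.mem_weyl hα
      rw [card_inversions_mul_sref_of_isPos hu.mem_weyl hα hp, ih hu (by omega)]
    · obtain ⟨ws', hws', hlen⟩ := hu.exists_isWord_mul_sref_of_isNeg hα hn
      have := hws'.len_le_length
      omega

theorem len_eq_card_inversions (hw : w ∈ R.Weyl) : B.len w = (B.inversions w).card := by
  obtain ⟨ws, hws, hlen⟩ := exists_isWord_length_eq_len (B := B) hw
  rw [hws.card_inversions_eq_length hlen.le, hlen]

/-- A `γ ∈ inversions (x * w)` with `w γ > 0` would put `w γ` into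
`inversions x ⊆ inversions w⁻¹`, forcing `γ < 0`; hence `γ ↦ -w γ` is the bijection. -/
theorem inversions_mul_of_subset (hx : x ∈ R.Weyl) (hw : w ∈ R.Weyl)
    (hsub : B.inversions x ⊆ B.inversions w⁻¹) :
    B.inversions (x * w) = (B.inversions w⁻¹ \ B.inversions x).image fun δ => -w⁻¹ δ := by
  ext γ
  simp only [Finset.mem_image, Finset.mem_sdiff, mem_inversions, LinearIsometryEquiv.coe_mul,
    LinearIsometryEquiv.coe_inv, Function.comp_apply, not_and]
  constructor
  · rintro ⟨hγ, hn⟩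
    have hwγ := R.apply_mem_of_mem_weyl hw hγ.1
    have hwγ_neg : B.IsNeg (w γ) := by
      refine (isPos_or_isNeg hwγ).resolve_left fun hp => ?_
      have := (mem_inversions.mp (hsub (mem_inversions.mpr ⟨hp, hn⟩))).2
      rw [LinearIsometryEquiv.coe_inv, LinearIsometryEquiv.symm_apply_apply] at this
      exact hγ.not_isNeg this
    refine ⟨-w γ, ⟨⟨(isPos_neg_iff hwγ).mpr hwγ_neg, ?_⟩, fun _ => ?_⟩, ?_⟩
    · rw [map_neg, LinearIsometryEquiv.symm_apply_apply, isNeg_neg_iff hγ.1]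
      exact hγ
    · rw [map_neg, isNeg_neg_iff (R.apply_mem_of_mem_weyl hx hwγ)]
      exact fun hp => hp.not_isNeg hn
    · rw [map_neg, LinearIsometryEquiv.symm_apply_apply, neg_neg]
  · rintro ⟨δ, ⟨⟨hδ, hn⟩, hδx⟩, rfl⟩
    have hw'δ := R.apply_mem_of_mem_weyl (inv_mem hw) hδ.1
    refine ⟨(isPos_neg_iff hw'δ).mpr hn, ?_⟩
    have hxδ := R.apply_mem_of_mem_weyl hx hδ.1
    rw [map_neg, LinearIsometryEquiv.apply_symm_apply, map_neg, isNeg_neg_iff hxδ]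
    exact (isPos_or_isNeg hxδ).resolve_right (hδx hδ)

theorem card_inversions_inv (hw : w ∈ R.Weyl) :
    (B.inversions w⁻¹).card = (B.inversions w).card := by
  have h := inversions_mul_of_subset (B := B) (one_mem _) hw (by simp [inversions_one])
  rw [one_mul, inversions_one, Finset.sdiff_empty] at h
  rw [h, Finset.card_image_of_injective _ fun a b hab => w⁻¹.injective (neg_injective hab)]

theorem len_mul_add_len_of_inversions_subset (hx : x ∈ R.Weyl) (hw : w ∈ R.Weyl)
    (hsub : B.inversions x ⊆ B.inversions w⁻¹) : B.len (x * w) + B.len x = B.len w := by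
  rw [len_eq_card_inversions (mul_mem hx hw), len_eq_card_inversions hx,
    len_eq_card_inversions hw, inversions_mul_of_subset hx hw hsub,
    Finset.card_image_of_injective _ fun a b hab => w⁻¹.injective (neg_injective hab),
    Finset.card_sdiff_of_subset hsub, ← card_inversions_inv hw]
  have := Finset.card_le_card hsub
  omega

end Base

namespace Base.IsHighest

variable {R : NRootSystem V} {B : Base R} {h γ : V} (hh : B.IsHighest h)
include hh

theorem isPos : B.IsPos h :=
  ⟨hh.1, fun β hβ => ((isPos_of_mem_base hβ).2 β hβ).trans (hh.2 β (B.subset hβ) β hβ)⟩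

/-- Were the pairing `n` of `γ > 0` with `h` negative, `s_h γ = γ - n h` would exceed `h`. -/
theorem inner_nonneg (hγ : B.IsPos γ) : 0 ≤ ⟪γ, h⟫ := by
  obtain ⟨n, hn, hs⟩ := R.exists_sref_eq_sub_smul hγ.1 hh.1
  suffices 0 ≤ n by
    have : (0 : ℝ) ≤ n := by exact_mod_cast this
    nlinarith [R.inner_self_pos hh.1]
  by_contra! hneg
  have hmem := R.reflect_mem h hh.1 γ hγ.1
  obtain ⟨β, hβ, h1⟩ := hγ.exists_one_le_coeff
  have hle := hh.2 _ hmem β hβ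
  rw [hs] at hmem hle
  rw [coeff_sub_smul hγ.1 hh.1 hmem hβ] at hle
  nlinarith [hh.isPos.2 β hβ]

theorem isNeg_sref (hγ : B.IsPos γ) (hpos : 0 < ⟪γ, h⟫) : B.IsNeg (sref h γ) := by
  obtain ⟨n, hn, hs⟩ := R.exists_sref_eq_sub_smul hγ.1 hh.1
  have hn1 : 0 < n := by
    have : (0 : ℝ) < n := pos_of_mul_pos_left (by linarith) (R.inner_self_pos hh.1).le
    exact_mod_cast this
  have hmem := R.reflect_mem h hh.1 γ hγ.1
  refine ⟨hmem, fun β hβ => ?_⟩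
  rw [hs] at hmem ⊢
  rw [coeff_sub_smul hγ.1 hh.1 hmem hβ]
  nlinarith [hh.2 γ hγ.1 β hβ, hh.isPos.2 β hβ]

/-- All terms of `(h|γ) = ∑ cᵢ (h|αᵢ)` are nonnegative, so `(h|γ) = 0` forces `γ` to be
supported on `Ĩ`. -/
theorem mem_span_Itil (hγ : B.IsPos γ) (h0 : ⟪γ, h⟫ = 0) :
    γ ∈ Submodule.span ℝ (B.Itil h : Set V) := by
  have hterms : ∀ α ∈ B.Δ, 0 ≤ (B.coeff γ α : ℝ) * ⟪h, α⟫ := fun α hα =>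
    mul_nonneg (by exact_mod_cast hγ.2 α hα)
      (real_inner_comm h α ▸ hh.inner_nonneg (isPos_of_mem_base hα))
  have hzero := (Finset.sum_eq_zero_iff_of_nonneg hterms).mp
    (by rw [← inner_eq_sum_coeff hγ.1, real_inner_comm, h0])
  rw [B.coeff_spec γ hγ.1]
  refine Submodule.sum_mem _ fun α hα => ?_
  by_cases hhα : ⟪h, α⟫ = 0
  · exact Submodule.smul_mem _ _ (Submodule.subset_span (by simp [Itil, hα, hhα]))
  · rw [(mul_eq_zero.mp (hzero α hα)).resolve_right hhα, zero_smul]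
    exact Submodule.zero_mem _

theorem inversions_subset {x : V ≃ₗᵢ[ℝ] V} (hx : x ∈ B.XI (B.Itil h)) :
    B.inversions x ⊆ B.inversions (sref h) := by
  intro γ hγ
  obtain ⟨hγpos, hxγ⟩ := mem_inversions.mp hγ
  refine mem_inversions.mpr ⟨hγpos, hh.isNeg_sref hγpos ?_⟩
  refine (hh.inner_nonneg hγpos).lt_of_ne fun h0 => ?_
  exact (hx.2 γ hγpos.1 (hh.mem_span_Itil hγpos h0.symm) hγpos).not_isNeg hxγ

end Base.IsHighest

open Base

theorem len_xa_mul_sref_highest_general (R : NRootSystem V) (B : Base R) {h : V}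
    (hh : B.IsHighest h) {x : V ≃ₗᵢ[ℝ] V} (hx : x ∈ B.XI (B.Itil h)) :
    (B.len (x * sref h) : ℤ) = (B.len (sref h) : ℤ) - B.len x := by
  have hs : sref h ∈ R.Weyl := Subgroup.subset_closure ⟨h, hh.1, rfl⟩
  have hsub : B.inversions x ⊆ B.inversions (sref h)⁻¹ := sref_inv h ▸ hh.inversions_subset hx
  have := len_mul_add_len_of_inversions_subset hx.1 hs hsub
  omega

/-- for every positive long root `α`, one has
`l(x_α s_{α̃}) = l(s_{α̃}) − l(x_α)`, where `x_α` is the unique element of `X_Ĩ`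
with `x_α(α̃) = α`. -/
theorem len_xa_mul_sref_highest (R : NRootSystem V) (B : Base R) {h : V}
    (hh : B.IsHighest h) {α : V} (hα : R.IsLong α) (hαpos : B.IsPos α)
    {x : V ≃ₗᵢ[ℝ] V} (hx : x ∈ B.XI (B.Itil h)) (hxα : x h = α) :
    (B.len (x * sref h) : ℤ) = (B.len (sref h) : ℤ) - B.len x :=
  len_xa_mul_sref_highest_general R B hh hx
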